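/- arXiv:1605.00796 — 3 statements merged into one kernel-verified Lean document; each statement's English description precedes it below -/
import Mathlib

section
/- In an orthomodular lattice, Sasaki projections onto compatible elements commute: whenever b C c, we have (q & b) & c = (q & c) & b for all q. -/
/-- An orthomodular lattice: a bounded lattice with an orthocomplementation
satisfying the orthomodular law. -/
class OrthomodularLattice (α : Type*) extends Lattice α, BoundedOrder α, Compl α where
  compl_compl : ∀ a : α, aᶜᶜ = a
  compl_le_compl : ∀ a b : α, a ≤ b → bᶜ ≤ aᶜ
  sup_compl_eq_top : ∀ a : α, a ⊔ aᶜ = ⊤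
  inf_compl_eq_bot : ∀ a : α, a ⊓ aᶜ = ⊥
  orthomodular : ∀ a b : α, a ≤ b → b = a ⊔ (b ⊓ aᶜ)

/-- The Sasaki projection of `a` onto `b`. -/
def sasaki {α : Type*} [OrthomodularLattice α] (a b : α) : α := b ⊓ (a ⊔ bᶜ)

/-- Two elements are compatible (commute). -/
def Commutes {α : Type*} [OrthomodularLattice α] (p q : α) : Prop :=
  p = (p ⊓ q) ⊔ (p ⊓ qᶜ)

namespace OMLAux

variable {α : Type*} [OrthomodularLattice α]

lemma cc (a : α) : aᶜᶜ = a := OrthomodularLattice.compl_compl a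
lemma cle {a b : α} (h : a ≤ b) : bᶜ ≤ aᶜ := OrthomodularLattice.compl_le_compl a b h
lemma om {a b : α} (h : a ≤ b) : b = a ⊔ (b ⊓ aᶜ) := OrthomodularLattice.orthomodular a b h
lemma ic (a : α) : a ⊓ aᶜ = ⊥ := OrthomodularLattice.inf_compl_eq_bot a

lemma compl_sup' (a b : α) : (a ⊔ b)ᶜ = aᶜ ⊓ bᶜ := by
  apply le_antisymm
  · exact le_inf (cle le_sup_left) (cle le_sup_right)
  · have h1 : a ≤ (aᶜ ⊓ bᶜ)ᶜ := by
      have := cle (inf_le_left : aᶜ ⊓ bᶜ ≤ aᶜ); rwa [cc] at this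
    have h2 : b ≤ (aᶜ ⊓ bᶜ)ᶜ := by
      have := cle (inf_le_right : aᶜ ⊓ bᶜ ≤ bᶜ); rwa [cc] at this
    have h3 := cle (sup_le h1 h2)
    rwa [cc] at h3

lemma compl_inf' (a b : α) : (a ⊓ b)ᶜ = aᶜ ⊔ bᶜ := by
  have := compl_sup' aᶜ bᶜ
  rw [cc, cc] at this
  rw [← this, cc]

/-- dual orthomodular law -/
lemma dom {t c : α} (h : t ≤ c) : c ⊓ (t ⊔ cᶜ) = t := by
  have h1 := om (cle h)
  rw [cc] at h1
  have h2 : t = (cᶜ ⊔ (tᶜ ⊓ c))ᶜ := by rw [← h1, cc]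
  conv_rhs => rw [h2]
  rw [compl_sup', compl_inf', cc, cc]

lemma comm_of_le {t c : α} (h : t ≤ c) : Commutes t c := by
  unfold Commutes
  rw [inf_eq_left.2 h]
  exact (sup_eq_left.mpr inf_le_left).symm

/-- Sasaki projection of a commuting element -/
lemma sas_comm {y c : α} (h : Commutes y c) : c ⊓ (y ⊔ cᶜ) = y ⊓ c := by
  have h1 : y ⊔ cᶜ = (y ⊓ c) ⊔ cᶜ := by
    conv_lhs => rw [h]
    rw [sup_assoc, sup_eq_right.mpr (inf_le_right : y ⊓ cᶜ ≤ cᶜ)]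
  rw [h1, dom (inf_le_right : y ⊓ c ≤ c)]

lemma comm_symm {a b : α} (h : Commutes a b) : Commutes b a := by
  have hub : (b ⊓ a) ⊔ (b ⊓ aᶜ) ≤ b := sup_le inf_le_left inf_le_left
  have h1 := om hub
  have h2 : b ⊓ ((b ⊓ a) ⊔ (b ⊓ aᶜ))ᶜ = ⊥ := by
    rw [compl_sup', compl_inf', compl_inf', cc]
    calc b ⊓ ((bᶜ ⊔ aᶜ) ⊓ (bᶜ ⊔ a))
        = (b ⊓ (a ⊔ bᶜ)) ⊓ (aᶜ ⊔ bᶜ) := by ac_rfl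
      _ = (a ⊓ b) ⊓ (a ⊓ b)ᶜ := by rw [sas_comm h, compl_inf']
      _ = ⊥ := ic _
  rw [h2, sup_bot_eq] at h1
  exact h1

lemma comm_compl_right {a b : α} (h : Commutes a b) : Commutes a bᶜ := by
  unfold Commutes
  rw [cc, sup_comm]
  exact h

lemma comm_sup_left {p q a : α} (hp : Commutes p a) (hq : Commutes q a) :
    Commutes (p ⊔ q) a := by
  apply le_antisymm
  · apply sup_le
    · calc p = (p ⊓ a) ⊔ (p ⊓ aᶜ) := hp
        _ ≤ ((p ⊔ q) ⊓ a) ⊔ ((p ⊔ q) ⊓ aᶜ) :=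
          sup_le_sup (inf_le_inf_right _ le_sup_left) (inf_le_inf_right _ le_sup_left)
    · calc q = (q ⊓ a) ⊔ (q ⊓ aᶜ) := hq
        _ ≤ ((p ⊔ q) ⊓ a) ⊔ ((p ⊔ q) ⊓ aᶜ) :=
          sup_le_sup (inf_le_inf_right _ le_sup_right) (inf_le_inf_right _ le_sup_right)
  · exact sup_le inf_le_left inf_le_left

lemma key (b c q : α) (h : Commutes b c) :
    sasaki (sasaki q c) b = sasaki q (b ⊓ c) := by
  set x := sasaki q c with hx
  have hxc : x ≤ c := inf_le_left
  have hcb : Commutes c b := comm_symm h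
  have hbc' : Commutes (x ⊔ bᶜ) c :=
    comm_sup_left (comm_of_le hxc) (comm_symm (comm_compl_right hcb))
  -- φ_b(x) ≤ c
  have hle : b ⊓ (x ⊔ bᶜ) ≤ c := by
    calc b ⊓ (x ⊔ bᶜ) ≤ b ⊓ (c ⊔ bᶜ) :=
          inf_le_inf_left _ (sup_le_sup_right hxc _)
      _ = c ⊓ b := sas_comm hcb
      _ ≤ c := inf_le_left
  -- x ⊔ cᶜ = q ⊔ cᶜ
  have hxq : x ⊔ cᶜ = q ⊔ cᶜ := by
    have h1 := om (le_sup_right : cᶜ ≤ q ⊔ cᶜ)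
    rw [cc] at h1
    rw [hx]
    unfold sasaki
    rw [inf_comm c _, sup_comm]
    exact h1.symm
  calc sasaki x b = b ⊓ (x ⊔ bᶜ) := rfl
    _ = (b ⊓ (x ⊔ bᶜ)) ⊓ c := (inf_eq_left.mpr hle).symm
    _ = b ⊓ ((x ⊔ bᶜ) ⊓ c) := inf_assoc _ _ _
    _ = b ⊓ (c ⊓ ((x ⊔ bᶜ) ⊔ cᶜ)) := by rw [sas_comm hbc']
    _ = (b ⊓ c) ⊓ (x ⊔ (bᶜ ⊔ cᶜ)) := by rw [← inf_assoc, sup_assoc]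
    _ = (b ⊓ c) ⊓ (q ⊔ (bᶜ ⊔ cᶜ)) := by
          rw [sup_comm bᶜ cᶜ, ← sup_assoc, ← sup_assoc, hxq]
    _ = sasaki q (b ⊓ c) := by rw [sasaki, compl_inf', sup_comm bᶜ cᶜ]

end OMLAux

theorem sasaki_sasaki_comm {α : Type*} [OrthomodularLattice α] (b c : α)
    (h : Commutes b c) (q : α) :
    sasaki (sasaki q b) c = sasaki (sasaki q c) b := by
  rw [OMLAux.key c b q (OMLAux.comm_symm h), OMLAux.key b c q h, inf_comm]
end

section
/- In the lattice of subspaces of a finite-dimensional complex inner product space, for subspaces P and Q, the Sasaki projection P & Q := Q ⊓ (P ⊔ Qᗮ) equals the image of P under the orthogonal projection onto Q. -/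
/-! The orthogonal projection onto `Q` kills `Qᗮ` and fixes `Q` pointwise, so it maps any
`S ≥ Qᗮ` onto `Q ⊓ S`. Applied to `S = P ⊔ Qᗮ`, whose image is that of `P` alone, this
gives the Sasaki projection. -/

namespace Submodule

variable {𝕜 E : Type*} [RCLike 𝕜] [NormedAddCommGroup E] [InnerProductSpace 𝕜 E]
  (Q : Submodule 𝕜 E) [Q.HasOrthogonalProjection]

theorem map_starProjection_orthogonal : Qᗮ.map (Q.starProjection : E →ₗ[𝕜] E) = ⊥ :=
  LinearMap.le_ker_iff_map.mp fun _ hx => Q.starProjection_apply_eq_zero_iff.mpr hx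

theorem map_starProjection_of_orthogonal_le {S : Submodule 𝕜 E} (hS : Qᗮ ≤ S) :
    S.map (Q.starProjection : E →ₗ[𝕜] E) = Q ⊓ S := by
  apply le_antisymm
  · rintro _ ⟨s, hs, rfl⟩
    refine ⟨Q.starProjection_apply_mem s, ?_⟩
    have hsub : s - Q.starProjection s ∈ S := hS (Q.sub_starProjection_mem_orthogonal s)
    simpa only [sub_sub_cancel, ContinuousLinearMap.coe_coe, SetLike.mem_coe] using S.sub_mem hs hsub
  · rintro x ⟨hxQ, hxS⟩
    exact ⟨x, hxS, Q.starProjection_eq_self_iff.mpr hxQ⟩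

theorem inf_sup_orthogonal_eq_map_starProjection (P : Submodule 𝕜 E) :
    Q ⊓ (P ⊔ Qᗮ) = P.map (Q.starProjection : E →ₗ[𝕜] E) := by
  rw [← Q.map_starProjection_of_orthogonal_le le_sup_right, map_sup,
    map_starProjection_orthogonal, sup_bot_eq]

end Submodule

/-- In the lattice of subspaces of a finite-dimensional complex inner product space,
the Sasaki projection `P & Q := Q ⊓ (P ⊔ Qᗮ)` equals the image of `P` under the
orthogonal projection onto `Q`. -/
theorem sasaki_eq_map_orthogonalProjection
    {V : Type*} [NormedAddCommGroup V] [InnerProductSpace ℂ V] [FiniteDimensional ℂ V]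
    (P Q : Submodule ℂ V) :
    Q ⊓ (P ⊔ Qᗮ) =
      P.map (Q.subtype ∘ₗ (Q.orthogonalProjectionOnto : V →L[ℂ] Q).toLinearMap) :=
  Q.inf_sup_orthogonal_eq_map_starProjection P
end

section
/- Let v = |100⟩+|010⟩+|001⟩ ∈ (ℂ²)⊗³ and let k = span(v) & (ℂ²⊗ℂ²⊗span(|0⟩)) be the Sasaki projection of span(v) onto the subspace where the third qubit is |0⟩. Then k = span(|100⟩ + |010⟩). -/
noncomputable section

/-- The qubit space ℂ². -/
abbrev Qubit : Type := EuclideanSpace ℂ (Fin 2)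

/-- Two-qubit space, modelling ℂ² ⊗ ℂ². -/
abbrev Qubit2 : Type := EuclideanSpace ℂ (Fin 2 × Fin 2)

/-- Three-qubit space, modelling ℂ² ⊗ ℂ² ⊗ ℂ². -/
abbrev Qubit3 : Type := EuclideanSpace ℂ (Fin 2 × Fin 2 × Fin 2)

/-- Standard basis vector `|i⟩` of ℂ². -/
def e (i : Fin 2) : Qubit := EuclideanSpace.single i 1

/-- The tensor product of two qubit vectors. -/
def tp (v w : Qubit) : Qubit2 := WithLp.toLp 2 (fun p : Fin 2 × Fin 2 => v p.1 * w p.2)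

/-- The tensor product of three qubit vectors. -/
def tp3 (u v w : Qubit) : Qubit3 :=
  WithLp.toLp 2 (fun q : Fin 2 × Fin 2 × Fin 2 => u q.1 * v q.2.1 * w q.2.2)

/-- For a subspace `P` of ℂ²⊗ℂ², the subspace `P ⊗ ℂ²` of ℂ²⊗ℂ²⊗ℂ²:
the span of all simple tensors `p ⊗ w` with `p ∈ P`, `w ∈ ℂ²`. -/
def tensExt (P : Submodule ℂ Qubit2) : Submodule ℂ Qubit3 :=
  Submodule.span ℂ
    {x : Qubit3 | ∃ p ∈ P, ∃ w : Qubit, x = WithLp.toLp 2 (fun q : Fin 2 × Fin 2 × Fin 2 => p (q.1, q.2.1) * w q.2.2)}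

/-! The Sasaki projection of the line through `u + z`, where `u ∈ Q` and `z ∈ Qᗮ`, onto `Q` is
the line through `u`: adding `Qᗮ` absorbs `z`, and then the modular law together with
`Q ⊓ Qᗮ = ⊥` cuts `span {u} ⊔ Qᗮ` back down to `span {u}`. Here `Q` is spanned by the basis
vectors `|ab0⟩`, so `v = (|100⟩ + |010⟩) + |001⟩` is such a decomposition. -/

theorem Submodule.span_singleton_add_sup_of_mem {R M : Type*} [Ring R] [AddCommGroup M]
    [Module R M] {N : Submodule R M} (u : M) {z : M} (hz : z ∈ N) :
    Submodule.span R {u + z} ⊔ N = Submodule.span R {u} ⊔ N := by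
  apply le_antisymm <;>
    rw [sup_le_iff, Submodule.span_singleton_le_iff_mem] <;>
    refine ⟨Submodule.mem_sup.mpr ?_, le_sup_right⟩
  · exact ⟨u, Submodule.mem_span_singleton_self u, z, hz, rfl⟩
  · exact ⟨u + z, Submodule.mem_span_singleton_self _, -z, neg_mem hz, by abel⟩

theorem Submodule.inf_span_singleton_add_sup_orthogonal {𝕜 E : Type*} [RCLike 𝕜]
    [NormedAddCommGroup E] [InnerProductSpace 𝕜 E] {Q : Submodule 𝕜 E} {u z : E}
    (hu : u ∈ Q) (hz : z ∈ Qᗮ) :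
    Q ⊓ (Submodule.span 𝕜 {u + z} ⊔ Qᗮ) = Submodule.span 𝕜 {u} := by
  rw [Submodule.span_singleton_add_sup_of_mem u hz, inf_comm,
    sup_inf_assoc_of_le _ ((Submodule.span_singleton_le_iff_mem u Q).mpr hu),
    inf_comm, Q.inf_orthogonal_eq_bot, sup_bot_eq]

lemma tp3_e (a b c : Fin 2) : tp3 (e a) (e b) (e c) = EuclideanSpace.single (a, b, c) (1 : ℂ) := by
  ext ⟨x, y, z⟩
  simp only [tp3, e, PiLp.toLp_apply, PiLp.single_apply, Prod.mk.injEq]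
  split_ifs <;> simp_all

/-- With v = |100⟩+|010⟩+|001⟩, the Sasaki projection of span(v) onto
ℂ²⊗ℂ²⊗span(|0⟩) is span{|100⟩ + |010⟩}. -/
theorem sasaki_third_qubit_zero :
    let v : Qubit3 := tp3 (e 1) (e 0) (e 0) + tp3 (e 0) (e 1) (e 0) + tp3 (e 0) (e 0) (e 1)
    let Q : Submodule ℂ Qubit3 := Submodule.span ℂ
      {tp3 (e 0) (e 0) (e 0), tp3 (e 0) (e 1) (e 0),
       tp3 (e 1) (e 0) (e 0), tp3 (e 1) (e 1) (e 0)}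
    Q ⊓ (Submodule.span ℂ {v} ⊔ Qᗮ) =
      Submodule.span ℂ {tp3 (e 1) (e 0) (e 0) + tp3 (e 0) (e 1) (e 0)} := by
  intro v Q
  have hu : tp3 (e 1) (e 0) (e 0) + tp3 (e 0) (e 1) (e 0) ∈ Q :=
    add_mem (Submodule.subset_span (by simp)) (Submodule.subset_span (by simp))
  have hz : tp3 (e 0) (e 0) (e 1) ∈ Qᗮ := by
    rw [← Submodule.span_singleton_le_iff_mem, ← Submodule.isOrtho_iff_le, Submodule.isOrtho_span]
    simp [tp3_e, EuclideanSpace.inner_single_left]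
  exact Submodule.inf_span_singleton_add_sup_orthogonal hu hz
end
end
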